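/- arXiv:1604.00052 — 5 statements merged into one kernel-verified Lean document; each statement's English description precedes it below -/
import Mathlib

section
/- The symmetrized premetric d̂(p, q) = inf_{T_1, T_2 ∈ 𝒯} ‖T_1 p − T_2 q‖ does not separate inequivalent points: for d = 3, r = 1, and any vectors a_1, b_1 ∈ F^{n_1}, a_2, b_2 ∈ F^{n_2}, c ∈ F^{n_3}, the representatives p = vec(a_1, a_2, c) and q = vec(b_1, b_2, c) satisfy inf_{T_1, T_2 ∈ 𝒯} ‖T_1 p − T_2 q‖ = 0 (via T_1 = T_2 = diag(θ I_{n_1}, θ I_{n_2}, θ^{-2} I_{n_3}) as θ → 0), even when a_1 ⊗ a_2 ⊗ c ≠ b_1 ⊗ b_2 ⊗ c and p ≁ q. -/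
open scoped BigOperators
open scoped Matrix

noncomputable section

namespace TensorCond

variable {𝕜 : Type*} [RCLike 𝕜]
variable {d r : ℕ} {n : Fin d → ℕ}

/-- The space `F^{r(Σ+d)}` of vectorized factor matrices: `r` blocks,
each consisting of `d` factors `a_i^{(k)} ∈ F^{n_k}`. -/
abbrev Vecr (𝕜 : Type*) (d r : ℕ) (n : Fin d → ℕ) : Type _ :=
  Fin r → (k : Fin d) → Fin (n k) → 𝕜

/-- The tensor space `F^{n₁} ⊗ ⋯ ⊗ F^{n_d} ≅ F^Π`. -/
abbrev Tensor (𝕜 : Type*) (d : ℕ) (n : Fin d → ℕ) : Type _ :=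
  ((k : Fin d) → Fin (n k)) → 𝕜

/-- Column index of Terracini's matrix. -/
abbrev ColIdx (d r : ℕ) (n : Fin d → ℕ) : Type _ :=
  Fin r × Σ k : Fin d, Fin (n k)

/-- The tensor computation map `f`. -/
def tmap (p : Vecr 𝕜 d r n) : Tensor 𝕜 d n :=
  fun x => ∑ i, ∏ k, p i k (x k)

/-- Terracini's matrix `T_p`. -/
def terracini (p : Vecr 𝕜 d r n) :
    Matrix ((k : Fin d) → Fin (n k)) (ColIdx d r n) 𝕜 :=
  Matrix.of fun x q =>
    (if x q.2.1 = q.2.2 then (1 : 𝕜) else 0) *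
      ∏ l ∈ Finset.univ.erase q.2.1, p q.1 l (x l)

/-- Flattening of a representative vector. -/
def flat (p : Vecr 𝕜 d r n) : ColIdx d r n → 𝕜 :=
  fun q => p q.1 q.2.1 q.2.2

/-- Flattening as a linear map. -/
def flatLM (𝕜 : Type*) [RCLike 𝕜] (d r : ℕ) (n : Fin d → ℕ) :
    Vecr 𝕜 d r n →ₗ[𝕜] (ColIdx d r n → 𝕜) where
  toFun := flat
  map_add' _ _ := rfl
  map_smul' _ _ := rfl

/-- Euclidean norm of a finitely supported vector. -/
def eunorm {ι : Type*} [Fintype ι] (v : ι → 𝕜) : ℝ :=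
  Real.sqrt (∑ i, ‖v i‖ ^ 2)

/-- Euclidean norm of one block. -/
def bnorm (b : (k : Fin d) → Fin (n k) → 𝕜) : ℝ :=
  Real.sqrt (∑ k, ∑ j, ‖b k j‖ ^ 2)

/-- Euclidean norm on `F^{r(Σ+d)}`. -/
def vnorm (p : Vecr 𝕜 d r n) : ℝ :=
  Real.sqrt (∑ i, ∑ k, ∑ j, ‖p i k j‖ ^ 2)

/-- Euclidean (Frobenius) norm on the tensor space. -/
def tnorm (A : Tensor 𝕜 d n) : ℝ :=
  Real.sqrt (∑ x, ‖A x‖ ^ 2)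

/-- Scaling part of the group `𝒯`. -/
def IsScaling (s : Fin r → Fin d → 𝕜) : Prop :=
  (∀ i k, s i k ≠ 0) ∧ ∀ i, ∏ k, s i k = 1

/-- Action of an element of `𝒯`. -/
def act (π : Equiv.Perm (Fin r)) (s : Fin r → Fin d → 𝕜) (q : Vecr 𝕜 d r n) :
    Vecr 𝕜 d r n :=
  fun i k j => s i k * q (π i) k j

/-- `p ∼ q`. -/
def rel (p q : Vecr 𝕜 d r n) : Prop :=
  ∃ (π : Equiv.Perm (Fin r)) (s : Fin r → Fin d → 𝕜), IsScaling s ∧ p = act π s q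

/-- The distance measure `d(p,q) = inf_{T ∈ 𝒯} ‖p − Tq‖`. -/
def gdist (p q : Vecr 𝕜 d r n) : ℝ :=
  sInf { x | ∃ (π : Equiv.Perm (Fin r)) (s : Fin r → Fin d → 𝕜),
    IsScaling s ∧ x = vnorm (p - act π s q) }

/-- Tensors of rank at most `r`. -/
def SecZ (𝕜 : Type*) [RCLike 𝕜] (d r : ℕ) (n : Fin d → ℕ) : Set (Tensor 𝕜 d n) :=
  Set.range (tmap (𝕜 := 𝕜) (d := d) (r := r) (n := n))

/-- `r`-identifiability. -/
def Identifiable {𝕜 : Type*} [RCLike 𝕜] {d : ℕ} {n : Fin d → ℕ} (r : ℕ)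
    (A : Tensor 𝕜 d n) : Prop :=
  ∀ x y : Vecr 𝕜 d r n, tmap x = A → tmap y = A → rel x y

/-- `d(p, f†(A))`. -/
def fdist (p : Vecr 𝕜 d r n) (A : Tensor 𝕜 d n) : ℝ :=
  sInf { x | ∃ q : Vecr 𝕜 d r n, tmap q = A ∧ x = gdist p q }

/-- Multiset of singular values of a matrix. -/
def singularValues {m l : Type*} [Fintype m] [Fintype l] [DecidableEq l]
    (M : Matrix m l 𝕜) : Multiset ℝ :=
  Multiset.map
    (fun i => Real.sqrt ((Matrix.isHermitian_conjTranspose_mul_self M).eigenvalues i))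
    Finset.univ.val

/-- `j`-th largest singular value (1-indexed). -/
def nthSV {m l : Type*} [Fintype m] [Fintype l] [DecidableEq l]
    (M : Matrix m l 𝕜) (j : ℕ) : ℝ :=
  (((singularValues M).sort (· ≤ ·)).reverse).getD (j - 1) 0

/-- Spectral norm. -/
def specNorm {m l : Type*} [Fintype m] [Fintype l] (M : Matrix m l 𝕜) : ℝ :=
  sSup { x | ∃ v : l → 𝕜, eunorm v = 1 ∧ x = eunorm (M.mulVec v) }

/-- Kernel vector `k_i^{(k)}` (one block). -/
def kvec [NeZero d] (p : Vecr 𝕜 d r n) (i : Fin r) (k : Fin d) :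
    (l : Fin d) → Fin (n l) → 𝕜 :=
  fun l j =>
    if h0 : l = 0 then p i 0 (h0 ▸ j)
    else if hk : l = k then -(p i k (hk ▸ j)) else 0

/-- Kernel basis vector `k_i^{(k)} ⊗ e_i` as a flattened column vector. -/
def kcol [NeZero d] (p : Vecr 𝕜 d r n) (i : Fin r) (k : Fin d) :
    ColIdx d r n → 𝕜 :=
  fun q => if q.1 = i then kvec p i k q.2.1 q.2.2 else 0

/-- `P ⊗ I_{Σ+d}` for a permutation `π`. -/
def permMx (𝕜 : Type*) [RCLike 𝕜] (d r : ℕ) (n : Fin d → ℕ)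
    (π : Equiv.Perm (Fin r)) : Matrix (ColIdx d r n) (ColIdx d r n) 𝕜 :=
  Matrix.of fun x y => if y.1 = π x.1 ∧ x.2 = y.2 then 1 else 0

/-- Block diagonal scaling matrix `diag(D_1, …, D_r)`. -/
def scalMx (s : Fin r → Fin d → 𝕜) : Matrix (ColIdx d r n) (ColIdx d r n) 𝕜 :=
  Matrix.diagonal fun x => s x.1 x.2.1

/-- The set `𝒯 = 𝒫ℬ` of matrices. -/
def Tset (𝕜 : Type*) [RCLike 𝕜] (d r : ℕ) (n : Fin d → ℕ) :
    Set (Matrix (ColIdx d r n) (ColIdx d r n) 𝕜) :=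
  { M | ∃ (π : Equiv.Perm (Fin r)) (s : Fin r → Fin d → 𝕜),
      IsScaling s ∧ M = permMx 𝕜 d r n π * scalMx s }

/-- The `i`-th block `T_i` of Terracini's matrix. -/
def terraciniBlock (p : Vecr 𝕜 d r n) (i : Fin r) :
    Matrix ((k : Fin d) → Fin (n k)) (Σ k : Fin d, Fin (n k)) 𝕜 :=
  Matrix.of fun x q =>
    (if x q.1 = q.2 then (1 : 𝕜) else 0) * ∏ l ∈ Finset.univ.erase q.1, p i l (x l)

/-- Kernel-basis matrix `K = [k^{(2)} ⋯ k^{(d)}]` (single point, r = 1). -/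
def Kmx [NeZero d] (a : (k : Fin d) → Fin (n k) → 𝕜) :
    Matrix (Σ k : Fin d, Fin (n k)) {k : Fin d // k ≠ 0} 𝕜 :=
  Matrix.of fun q j => kvec (fun _ : Fin 1 => a) 0 j.1 q.1 q.2

/- Take `T₁ = T₂ = diag(θ I, θ I, θ⁻² I)`. Since `p` and `q` share their third factor,
`T₁ p − T₂ q = θ (p − q)`, whose norm `θ ‖p − q‖` tends to `0` with `θ`. -/

theorem sInf_eq_zero_of_forall_pos_mul_mem {S : Set ℝ} (hS : ∀ x ∈ S, 0 ≤ x) (D : ℝ)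
    (hD : ∀ θ : ℝ, 0 < θ → θ * D ∈ S) : sInf S = 0 := by
  have hbdd : BddBelow S := ⟨0, hS⟩
  have hlim : Filter.Tendsto (fun θ : ℝ => θ * D) (nhdsWithin 0 (Set.Ioi 0)) (nhds 0) := by
    simpa using
      (tendsto_nhdsWithin_of_tendsto_nhds (Filter.tendsto_id (x := nhds (0 : ℝ)))).mul_const D
  refine le_antisymm (ge_of_tendsto hlim ?_) (Real.sInf_nonneg hS)
  filter_upwards [self_mem_nhdsWithin] with θ hθ using csInf_le hbdd (hD θ hθ)

theorem vnorm_nonneg (p : Vecr 𝕜 d r n) : 0 ≤ vnorm p := Real.sqrt_nonneg _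

theorem vnorm_smul (c : 𝕜) (p : Vecr 𝕜 d r n) : vnorm (c • p) = ‖c‖ * vnorm p := by
  simp only [vnorm, Pi.smul_apply, smul_eq_mul, norm_mul, mul_pow, ← Finset.mul_sum]
  rw [Real.sqrt_mul (sq_nonneg _), Real.sqrt_sq (norm_nonneg _)]

theorem act_sub (π : Equiv.Perm (Fin r)) (s : Fin r → Fin d → 𝕜) (p q : Vecr 𝕜 d r n) :
    act π s p - act π s q = act π s (p - q) := by
  funext i k j
  simp only [act, Pi.sub_apply, mul_sub]

def thetaScaling (θ : 𝕜) : Fin r → Fin 3 → 𝕜 :=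
  fun _ k => if k = 2 then (θ ^ 2)⁻¹ else θ

theorem isScaling_thetaScaling {θ : 𝕜} (hθ : θ ≠ 0) : IsScaling (thetaScaling (r := r) θ) := by
  refine ⟨fun _ k => ?_, fun _ => ?_⟩
  · unfold thetaScaling
    split_ifs <;> simp [hθ]
  · simp only [thetaScaling, Fin.isValue, Fin.prod_univ_three, Fin.reduceEq, ↓reduceIte]
    field_simp

theorem act_thetaScaling_of_forall_eq_zero (θ : 𝕜) {n : Fin 3 → ℕ} {p : Vecr 𝕜 3 r n}
    (hp : ∀ i, p i 2 = 0) : act (Equiv.refl _) (thetaScaling θ) p = θ • p := by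
  funext i k j
  by_cases hk : k = 2
  · subst hk
    simp [act, hp]
  · simp [act, thetaScaling, hk]

theorem symmetrized_premetric_not_separating_general
    {n : Fin 3 → ℕ}
    (a b : (k : Fin 3) → Fin (n k) → 𝕜) (hc : a 2 = b 2) :
    sInf { x : ℝ | ∃ s t : Fin 1 → Fin 3 → 𝕜, IsScaling s ∧ IsScaling t ∧
      x = vnorm (act (Equiv.refl (Fin 1)) s (fun _ => a : Vecr 𝕜 3 1 n)
                  - act (Equiv.refl (Fin 1)) t (fun _ => b : Vecr 𝕜 3 1 n)) } = 0 := by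
  refine sInf_eq_zero_of_forall_pos_mul_mem ?_
    (vnorm ((fun _ => a) - fun _ => b : Vecr 𝕜 3 1 n)) fun θ hθ => ?_
  · rintro x ⟨s, t, -, -, rfl⟩
    exact vnorm_nonneg _
  · have hθ' : ((θ : ℝ) : 𝕜) ≠ 0 := RCLike.ofReal_ne_zero.mpr hθ.ne'
    refine ⟨thetaScaling (θ : 𝕜), thetaScaling (θ : 𝕜), isScaling_thetaScaling hθ',
      isScaling_thetaScaling hθ', ?_⟩
    have hdiff : ∀ i, ((fun _ => a) - fun _ => b : Vecr 𝕜 3 1 n) i 2 = 0 := fun _ =>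
      sub_eq_zero.mpr hc
    rw [act_sub, act_thetaScaling_of_forall_eq_zero _ hdiff, vnorm_smul, RCLike.norm_ofReal,
      abs_of_pos hθ]

/-- the symmetrized premetric `d̂(p,q) = inf_{T₁,T₂ ∈ 𝒯} ‖T₁p − T₂q‖`
does not separate inequivalent points: for `d = 3`, `r = 1` and representatives
`p = vec(a₁,a₂,c)`, `q = vec(b₁,b₂,c)` sharing the third factor, the infimum is `0`. -/
theorem symmetrized_premetric_not_separating
    {n : Fin 3 → ℕ} (hn : ∀ k, 2 ≤ n k)
    (a b : (k : Fin 3) → Fin (n k) → 𝕜) (hc : a 2 = b 2) :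
    sInf { x : ℝ | ∃ s t : Fin 1 → Fin 3 → 𝕜, IsScaling s ∧ IsScaling t ∧
      x = vnorm (act (Equiv.refl (Fin 1)) s (fun _ => a : Vecr 𝕜 3 1 n)
                  - act (Equiv.refl (Fin 1)) t (fun _ => b : Vecr 𝕜 3 1 n)) } = 0 :=
  symmetrized_premetric_not_separating_general a b hc

end TensorCond
end
end

section
/- Let p = vecr(b_1, …, b_r) ∈ F^{r(Σ+d)} with b_i = (a_i^{(1)}, …, a_i^{(d)}), and suppose Terracini's matrix T_p has rank r(Σ+1). Then the r(d−1) vectors k_i^{(k)} ⊗ e_i (2 ≤ k ≤ d, 1 ≤ i ≤ r), where e_i is the i-th standard basis vector of F^r, form a basis of the kernel of T_p; in particular dim ker T_p = r(d−1). -/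
open scoped BigOperators
open scoped Matrix

noncomputable section

namespace TensorCond

variable {𝕜 : Type*} [RCLike 𝕜]
variable {d r : ℕ} {n : Fin d → ℕ}

/-!
The vectors `k_i^{(k)} ⊗ e_i` lie in `ker T_p`: the block `T_i` sends `v` to
`x ↦ ∑_m (∏_{l ≠ m} a_i^{(l)}(x_l)) v_m(x_m)`, and the two nonzero blocks of `k_i^{(k)}` give
`±∏_l a_i^{(l)}(x_l)`. Rank–nullity turns the rank hypothesis into `dim ker T_p = r(d−1)`, so it
remains to see that the vectors are independent, i.e. that no factor `a_i^{(k)}` vanishes.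
Now `ker T_p` contains the direct sum of the kernels of the blocks `T_i`, each of dimension at
least `d − 1`; if `a_i^{(l)} = 0`, then `ker T_i` contains every standard basis vector outside
mode `l`, which are at least `2(d − 1) ≥ d` many, and `dim ker T_p` would exceed `r(d−1)`.
-/

theorem linearIndependent_of_apply_ne_zero {R ι X : Type*} [Ring R] [NoZeroDivisors R]
    [Fintype ι] (v : ι → X → R) (c : ι → X)
    (hdiag : ∀ i, v i (c i) ≠ 0) (hoff : ∀ i j, j ≠ i → v j (c i) = 0) :
    LinearIndependent R v := by
  rw [Fintype.linearIndependent_iff]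
  intro g hg i
  have h := congrFun hg (c i)
  simp only [Finset.sum_apply, Pi.smul_apply, smul_eq_mul, Pi.zero_apply] at h
  rw [Finset.sum_eq_single i (fun j _ hji => by rw [hoff i j hji, mul_zero])
    (fun hi => absurd (Finset.mem_univ i) hi)] at h
  exact (mul_eq_zero.mp h).resolve_right (hdiag i)

open Module LinearMap

theorem terraciniBlock_mulVec_apply (p : Vecr 𝕜 d r n) (i : Fin r)
    (v : (Σ k : Fin d, Fin (n k)) → 𝕜) (x : (k : Fin d) → Fin (n k)) :
    (terraciniBlock p i *ᵥ v) x = ∑ m, (∏ l ∈ Finset.univ.erase m, p i l (x l)) * v ⟨m, x m⟩ := by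
  simp [Matrix.mulVec, dotProduct, terraciniBlock, ← Finset.univ_sigma_univ, Finset.sum_sigma,
    ite_mul]

theorem terracini_mulVec (p : Vecr 𝕜 d r n) (v : ColIdx d r n → 𝕜) :
    terracini p *ᵥ v = ∑ i, terraciniBlock p i *ᵥ fun σ => v (i, σ) := by
  funext x
  simp [Matrix.mulVec, dotProduct, Fintype.sum_prod_type, terracini, terraciniBlock]

theorem terraciniBlock_mulVec_single_of_eq_zero (p : Vecr 𝕜 d r n) {i : Fin r} {l : Fin d}
    (hl : p i l = 0) {σ : Σ k : Fin d, Fin (n k)} (hσ : σ.1 ≠ l) :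
    terraciniBlock p i *ᵥ Pi.single σ 1 = 0 := by
  classical
  funext x
  have : ∏ l' ∈ Finset.univ.erase σ.1, p i l' (x l') = 0 :=
    Finset.prod_eq_zero (Finset.mem_erase.mpr ⟨hσ.symm, Finset.mem_univ l⟩) (congrFun hl (x l))
  simp [Matrix.mulVec_single, terraciniBlock, this]

theorem sum_finrank_ker_terraciniBlock_le (p : Vecr 𝕜 d r n) :
    ∑ i, finrank 𝕜 (ker (terraciniBlock p i).mulVecLin)
      ≤ finrank 𝕜 (ker (terracini p).mulVecLin) := by
  let glue : ((i : Fin r) → ker (terraciniBlock p i).mulVecLin) →ₗ[𝕜]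
      ker (terracini p).mulVecLin :=
    { toFun := fun v => ⟨fun q => (v q.1 : _ → 𝕜) q.2, by
        simp only [mem_ker, Matrix.mulVecLin_apply, terracini_mulVec]
        exact Finset.sum_eq_zero fun i _ => (v i).2⟩
      map_add' := fun _ _ => rfl
      map_smul' := fun _ _ => rfl }
  have hglue : Function.Injective glue := fun v w h => by
    funext i; ext σ
    exact congrFun (congrArg Subtype.val h) (i, σ)
  simpa [finrank_pi_fintype] using finrank_le_finrank_of_injective hglue

theorem le_finrank_ker_terraciniBlock_of_eq_zero (hd : 2 ≤ d) (hn : ∀ k, 2 ≤ n k)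
    (p : Vecr 𝕜 d r n) {i : Fin r} {l : Fin d} (hl : p i l = 0) :
    d ≤ finrank 𝕜 (ker (terraciniBlock p i).mulVecLin) := by
  classical
  let σ : {m : Fin d // m ≠ l} × Fin 2 → Σ k : Fin d, Fin (n k) :=
    fun mj => ⟨mj.1, Fin.castLE (hn mj.1) mj.2⟩
  have hσ : Function.Injective σ := by
    rintro ⟨m, j⟩ ⟨m', j'⟩ h
    obtain ⟨hm, hj⟩ := Sigma.mk.inj_iff.mp h
    obtain rfl := Subtype.ext hm
    exact congrArg _ (Fin.castLE_injective _ (eq_of_heq hj))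
  let v : {m : Fin d // m ≠ l} × Fin 2 → ker (terraciniBlock p i).mulVecLin :=
    fun mj => ⟨_, terraciniBlock_mulVec_single_of_eq_zero p hl (σ := σ mj) mj.1.2⟩
  have hv : LinearIndependent 𝕜 v :=
    .of_comp (ker _).subtype ((Pi.linearIndependent_single_one _ 𝕜).comp σ hσ)
  have := hv.fintype_card_le_finrank
  simp at this
  omega

section kernelVectors

variable [NeZero d]

theorem kvec_zero (p : Vecr 𝕜 d r n) (i : Fin r) (k : Fin d) (j : Fin (n 0)) :
    kvec p i k 0 j = p i 0 j := by
  simp [kvec]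

theorem kvec_self (p : Vecr 𝕜 d r n) (i : Fin r) {k : Fin d} (hk : k ≠ 0) (j : Fin (n k)) :
    kvec p i k k j = -p i k j := by
  simp [kvec, hk]

theorem kvec_of_ne (p : Vecr 𝕜 d r n) (i : Fin r) (k : Fin d) {l : Fin d} (h0 : l ≠ 0)
    (hk : l ≠ k) (j : Fin (n l)) : kvec p i k l j = 0 := by
  simp [kvec, h0, hk]

theorem terraciniBlock_mulVec_kvec (p : Vecr 𝕜 d r n) (i : Fin r) {k : Fin d} (hk : k ≠ 0) :
    terraciniBlock p i *ᵥ (fun σ => kvec p i k σ.1 σ.2) = 0 := by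
  classical
  funext x
  rw [terraciniBlock_mulVec_apply, Pi.zero_apply,
    ← Finset.add_sum_erase _ _ (Finset.mem_univ 0),
    ← Finset.add_sum_erase _ _ (Finset.mem_erase.mpr ⟨hk, Finset.mem_univ k⟩),
    Finset.sum_eq_zero fun m hm => by
      obtain ⟨hmk, hm0⟩ := Finset.mem_erase.mp hm
      rw [kvec_of_ne p i k (Finset.mem_erase.mp hm0).1 hmk, mul_zero]]
  rw [kvec_zero, kvec_self p i hk, mul_neg, add_zero,
    Finset.prod_erase_mul _ _ (Finset.mem_univ 0),
    Finset.prod_erase_mul _ _ (Finset.mem_univ k), add_neg_cancel]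

theorem terracini_mulVec_kcol (p : Vecr 𝕜 d r n) (i : Fin r) {k : Fin d} (hk : k ≠ 0) :
    terracini p *ᵥ kcol p i k = 0 := by
  rw [terracini_mulVec]
  refine Finset.sum_eq_zero fun i' _ => ?_
  by_cases h : i' = i
  · subst h
    simpa [kcol] using terraciniBlock_mulVec_kvec p i' hk
  · simp only [kcol, if_neg h]
    exact Matrix.mulVec_zero _

theorem linearIndependent_kvec (p : Vecr 𝕜 d r n) (i : Fin r) (h : ∀ k, k ≠ 0 → p i k ≠ 0) :
    LinearIndependent 𝕜 fun k : {k : Fin d // k ≠ 0} =>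
      fun σ : Σ l : Fin d, Fin (n l) => kvec p i k σ.1 σ.2 := by
  choose j hj using fun k : {k : Fin d // k ≠ 0} => Function.ne_iff.mp (h k k.2)
  refine linearIndependent_of_apply_ne_zero _ (fun k => ⟨k, j k⟩) (fun k => ?_)
    fun k k' hne => kvec_of_ne p i k' k.2 (Subtype.coe_ne_coe.mpr hne.symm) _
  simpa [kvec_self p i k.2] using hj k

theorem linearIndependent_kcol (p : Vecr 𝕜 d r n) (h : ∀ i k, k ≠ 0 → p i k ≠ 0) :
    LinearIndependent 𝕜 fun q : {q : Fin r × Fin d // q.2 ≠ 0} => kcol p q.1.1 q.1.2 := by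
  choose j hj using fun q : {q : Fin r × Fin d // q.2 ≠ 0} => Function.ne_iff.mp (h _ _ q.2)
  refine linearIndependent_of_apply_ne_zero _ (fun q => (q.1.1, ⟨q.1.2, j q⟩)) (fun q => ?_) ?_
  · simpa [kcol, kvec_self p _ q.2] using hj q
  · rintro ⟨⟨i, k⟩, hk⟩ ⟨⟨i', k'⟩, hk'⟩ hne
    by_cases hi : i = i'
    · subst hi
      have hkk : k ≠ k' := fun hkk => hne (by subst hkk; rfl)
      simpa [kcol] using kvec_of_ne p i k' hk hkk _
    · simp [kcol, hi]

theorem pred_le_finrank_ker_terraciniBlock_of_ne_zero (p : Vecr 𝕜 d r n) (i : Fin r)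
    (h : ∀ k, k ≠ 0 → p i k ≠ 0) :
    d - 1 ≤ finrank 𝕜 (ker (terraciniBlock p i).mulVecLin) := by
  let v : {k : Fin d // k ≠ 0} → ker (terraciniBlock p i).mulVecLin :=
    fun k => ⟨_, terraciniBlock_mulVec_kvec p i k.2⟩
  have hv : LinearIndependent 𝕜 v := .of_comp (ker _).subtype (linearIndependent_kvec p i h)
  simpa using hv.fintype_card_le_finrank

theorem finrank_ker_terracini (hn : ∀ k, 2 ≤ n k) (p : Vecr 𝕜 d r n)
    (hrank : (terracini p).rank = r * ((∑ k, (n k - 1)) + 1)) :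
    finrank 𝕜 (ker (terracini p).mulVecLin) = r * (d - 1) := by
  have hsum : ∑ k, n k = (∑ k, (n k - 1)) + d := by
    rw [Finset.sum_congr rfl fun k _ => (Nat.sub_add_cancel (one_le_two.trans (hn k))).symm,
      Finset.sum_add_distrib]
    simp
  have h := finrank_range_add_finrank_ker (terracini p).mulVecLin
  rw [← Matrix.rank, hrank, finrank_pi, Fintype.card_prod, Fintype.card_sigma,
    Fintype.card_fin] at h
  simp only [Fintype.card_fin, hsum] at h
  have hd : 1 ≤ d := NeZero.one_le
  rw [show r * ((∑ k, (n k - 1)) + d) = r * ((∑ k, (n k - 1)) + 1) + r * (d - 1) by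
    rw [← mul_add]; congr 1; omega] at h
  exact Nat.add_left_cancel h

theorem pred_le_finrank_ker_terraciniBlock (hd : 2 ≤ d) (hn : ∀ k, 2 ≤ n k)
    (p : Vecr 𝕜 d r n) (i : Fin r) :
    d - 1 ≤ finrank 𝕜 (ker (terraciniBlock p i).mulVecLin) := by
  by_cases h : ∃ l, p i l = 0
  · obtain ⟨l, hl⟩ := h
    exact (Nat.sub_le d 1).trans (le_finrank_ker_terraciniBlock_of_eq_zero hd hn p hl)
  · exact pred_le_finrank_ker_terraciniBlock_of_ne_zero p i fun k _ hk => h ⟨k, hk⟩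

theorem terracini_factor_ne_zero (hn : ∀ k, 2 ≤ n k) (p : Vecr 𝕜 d r n)
    (hrank : (terracini p).rank = r * ((∑ k, (n k - 1)) + 1)) {i : Fin r} {k : Fin d}
    (hk : k ≠ 0) : p i k ≠ 0 := by
  intro hzero
  have hd : 2 ≤ d := by
    have := mt Fin.val_eq_zero_iff.mp hk
    omega
  have hlt : ∑ _i : Fin r, (d - 1) < ∑ i, finrank 𝕜 (ker (terraciniBlock p i).mulVecLin) :=
    Finset.sum_lt_sum (fun i _ => pred_le_finrank_ker_terraciniBlock hd hn p i)
      ⟨i, Finset.mem_univ i, by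
        have := le_finrank_ker_terraciniBlock_of_eq_zero hd hn p hzero
        omega⟩
  have := hlt.trans_le (sum_finrank_ker_terraciniBlock_le p)
  rw [finrank_ker_terracini hn p hrank] at this
  simp at this

end kernelVectors

theorem terracini_kernel_basis_general [NeZero d]
    (hn : ∀ k, 2 ≤ n k)
    (p : Vecr 𝕜 d r n)
    (hrank : (terracini p).rank = r * ((∑ k, (n k - 1)) + 1)) :
    LinearIndependent 𝕜
      (fun q : {q : Fin r × Fin d // q.2 ≠ 0} => kcol p q.1.1 q.1.2)
    ∧ Submodule.span 𝕜
        (Set.range (fun q : {q : Fin r × Fin d // q.2 ≠ 0} => kcol p q.1.1 q.1.2))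
        = LinearMap.ker (terracini p).mulVecLin
    ∧ Module.finrank 𝕜 (LinearMap.ker (terracini p).mulVecLin) = r * (d - 1) := by
  have hli := linearIndependent_kcol p fun _ _ hk => terracini_factor_ne_zero hn p hrank hk
  have hker := finrank_ker_terracini hn p hrank
  have hle : Submodule.span 𝕜 (Set.range fun q : {q : Fin r × Fin d // q.2 ≠ 0} =>
      kcol p q.1.1 q.1.2) ≤ ker (terracini p).mulVecLin :=
    Submodule.span_le.mpr <| Set.range_subset_iff.mpr fun q => terracini_mulVec_kcol p q.1.1 q.2
  refine ⟨hli, Submodule.eq_of_le_of_finrank_eq hle ?_, hker⟩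
  rw [finrank_span_eq_card hli, hker,
    Fintype.card_congr (Equiv.subtypeProdEquivSigmaSubtype fun _ k => k ≠ 0)]
  simp

/-- if Terracini's matrix has rank `r(Σ+1)`, then the `r(d−1)` vectors
`k_i^{(k)} ⊗ e_i` form a basis of its kernel; in particular `dim ker T_p = r(d−1)`. -/
theorem terracini_kernel_basis [NeZero d]
    (hd : 2 ≤ d) (hn : ∀ k, 2 ≤ n k) (hr : 1 ≤ r)
    (p : Vecr 𝕜 d r n)
    (hrank : (terracini p).rank = r * ((∑ k, (n k - 1)) + 1)) :
    LinearIndependent 𝕜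
      (fun q : {q : Fin r × Fin d // q.2 ≠ 0} => kcol p q.1.1 q.1.2)
    ∧ Submodule.span 𝕜
        (Set.range (fun q : {q : Fin r × Fin d // q.2 ≠ 0} => kcol p q.1.1 q.1.2))
        = LinearMap.ker (terracini p).mulVecLin
    ∧ Module.finrank 𝕜 (LinearMap.ker (terracini p).mulVecLin) = r * (d - 1) :=
  terracini_kernel_basis_general hn p hrank

end TensorCond
end
end

section
/- A rank-1 tensor A = α a^{(1)} ⊗ ⋯ ⊗ a^{(d)} ∈ F^{n_1} ⊗ ⋯ ⊗ F^{n_d} with ‖a^{(k)}‖ = 1 for all k and α > 0 real has norm-balanced absolute condition number κ_A(A) = α^{1/d − 1} and norm-balanced relative condition number κ(A) = d^{-1/2}. That is, for the norm-balanced representative p = vec(α^{1/d} a^{(1)}, …, α^{1/d} a^{(d)}) one has ς_N(T_p) = α^{1−1/d} (with N = Σ+1) and ς_N(T_p)^{-1}·‖A‖/‖p‖ = 1/√d. -/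
/-!
Write `p = β • a` with `β = α ^ (1/d)`; Terracini's matrix is homogeneous of degree `d - 1`, so
`T_p = β ^ (d - 1) • T_a`. For unit factors, `T_a` maps a vector `u` in block `k` to the product
tensor `a¹ ⊗ ⋯ ⊗ u ⊗ ⋯ ⊗ aᵈ`, and inner products of product tensors are products of inner
products of their factors. Complete each `a k` to an orthonormal basis `B k` of `F^{n_k}`: the `Σ`
vectors `B k j`, `j ≠ 0`, are mapped to orthonormal tensors orthogonal to `A = a¹ ⊗ ⋯ ⊗ aᵈ`, while
the `d` block vectors `a k` are all mapped to `A`. Mixing the latter by a unitary `C` whose first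
row is constant `1 / √d` turns their images into `√d • A, 0, …, 0`. Hence the singular values of
`T_a` are `√d`, then `1` (`Σ` times), then `0` (`d - 1` times), so `ς_{Σ+1}(T_p) = β ^ (d - 1)`,
and `‖A‖ = β ^ d`, `‖p‖ = β √d` give the relative condition number.
-/

open scoped BigOperators
open scoped Matrix

noncomputable section

namespace TensorCond

variable {𝕜 : Type*} [RCLike 𝕜]
variable {d r : ℕ} {n : Fin d → ℕ}

open Finset Matrix

section LinearAlgebra

variable {ι : Type*} [Fintype ι] [DecidableEq ι]

open Polynomial in
theorem map_eigenvalues_eq_of_diagonalization {A W : Matrix ι ι 𝕜} (hA : A.IsHermitian)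
    (hW : Wᴴ * W = 1) (μ : ι → ℝ) (h : A = W * diagonal (RCLike.ofReal ∘ μ) * Wᴴ) :
    univ.val.map hA.eigenvalues = univ.val.map μ := by
  have hchar : A.charpoly = ∏ i, (X - C (μ i : 𝕜) : 𝕜[X]) := by
    rw [h, charpoly_mul_comm, ← Matrix.mul_assoc, hW, Matrix.one_mul, charpoly_diagonal]
    rfl
  apply Multiset.map_injective (RCLike.ofReal_injective (K := 𝕜))
  rw [Multiset.map_map, ← hA.roots_charpoly_eq_eigenvalues, hchar, roots_prod]
  · simp
  · simp [Finset.prod_ne_zero_iff, X_sub_C_ne_zero]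

theorem singularValues_eq_of_mul_unitary {m : Type*} [Fintype m] (M : Matrix m ι 𝕜)
    {W : Matrix ι ι 𝕜} (hW : Wᴴ * W = 1) {σ : ι → ℝ} (hσ : ∀ i, 0 ≤ σ i)
    (h : (M * W)ᴴ * (M * W) = diagonal fun i => ((σ i ^ 2 : ℝ) : 𝕜)) :
    singularValues M = univ.val.map σ := by
  have hgram : Mᴴ * M = W * diagonal (RCLike.ofReal ∘ fun i => σ i ^ 2) * Wᴴ := by
    have hW' : W * Wᴴ = 1 := mul_eq_one_comm.mp hW
    calc Mᴴ * M = (W * Wᴴ) * (Mᴴ * M) * (W * Wᴴ) := by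
          rw [hW', Matrix.one_mul, Matrix.mul_one]
      _ = W * ((M * W)ᴴ * (M * W)) * Wᴴ := by simp only [conjTranspose_mul, Matrix.mul_assoc]
      _ = _ := by rw [h]; rfl
  rw [singularValues]
  simpa [Multiset.map_map, Real.sqrt_sq (hσ _)] using congrArg (Multiset.map Real.sqrt)
    (map_eigenvalues_eq_of_diagonalization _ hW _ hgram)

theorem nthSV_eq_of_singularValues_eq {m : Type*} [Fintype m] (M : Matrix m ι 𝕜)
    {x y : ℝ} {D S : ℕ} (hy : 0 ≤ y) (hyx : y ≤ x) (hS : 1 ≤ S)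
    (h : singularValues M = {x} + D • {0} + S • {y}) : nthSV M (S + 1) = y := by
  set l := List.replicate D 0 ++ List.replicate S y ++ [x]
  have hl : (l : Multiset ℝ) = singularValues M := by
    rw [h, Multiset.nsmul_singleton, Multiset.nsmul_singleton]
    simp only [l, ← Multiset.coe_add, Multiset.coe_replicate, Multiset.coe_singleton]
    abel
  have hsorted : l.Pairwise (· ≤ ·) := by
    simp only [l, List.pairwise_append, List.pairwise_replicate, List.mem_replicate,
      List.mem_singleton, List.pairwise_singleton]
    grind
  obtain ⟨S, rfl⟩ := Nat.exists_eq_add_of_le' hS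
  rw [nthSV, ← hl, Multiset.coe_sort, List.mergeSort_eq_self _ hsorted]
  simp [l, List.getD_eq_getElem?_getD]

theorem sum_singleton_ite_eq {α : Type*} (i₀ : ι) (x y : α) :
    ∑ i, ({if i = i₀ then x else y} : Multiset α) = {x} + (Fintype.card ι - 1) • {y} := by
  rw [← add_sum_erase _ _ (mem_univ i₀), if_pos rfl,
    sum_congr rfl fun i hi => by rw [if_neg (ne_of_mem_erase hi)], sum_const,
    card_erase_of_mem (mem_univ _), card_univ]

theorem star_row_dotProduct_row {B : Matrix ι ι 𝕜} (hB : B * Bᴴ = 1) (i j : ι) :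
    star (B i) ⬝ᵥ B j = (1 : Matrix ι ι 𝕜) i j := by
  have hji := congrFun (congrFun hB j) i
  simp only [mul_apply, conjTranspose_apply, RCLike.star_def, one_apply] at hji
  simp only [dotProduct, Pi.star_apply, RCLike.star_def, one_apply, mul_comm (starRingEnd 𝕜 _)]
  rw [hji]
  exact if_congr eq_comm rfl rfl

theorem exists_orthonormal_rows {v : ι → 𝕜} (hv : star v ⬝ᵥ v = 1) (i₀ : ι) :
    ∃ B : Matrix ι ι 𝕜, B * Bᴴ = 1 ∧ B i₀ = v := by
  have hunit : Orthonormal 𝕜 (({i₀} : Set ι).domRestrict fun _ => WithLp.toLp 2 v) := by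
    rw [orthonormal_iff_ite]
    rintro ⟨i, hi⟩ ⟨j, hj⟩
    rw [Set.mem_singleton_iff] at hi hj
    subst hi hj
    rw [if_pos rfl, Set.domRestrict_apply, EuclideanSpace.inner_toLp_toLp, dotProduct_comm, hv]
  obtain ⟨b, hb⟩ := hunit.exists_orthonormalBasis_extension_of_card_eq (by simp)
  refine ⟨of fun i => WithLp.ofLp (b i), ?_, ?_⟩
  · ext i j
    have hji := orthonormal_iff_ite.mp b.orthonormal j i
    rw [EuclideanSpace.inner_eq_star_dotProduct] at hji
    simp only [mul_apply, conjTranspose_apply, of_apply, one_apply]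
    rw [← if_congr eq_comm rfl rfl, ← hji]
    rfl
  · show (fun j => (b i₀).ofLp j) = v
    rw [hb i₀ rfl]

end LinearAlgebra

section ProductTensors

def prodTensor (u : (k : Fin d) → Fin (n k) → 𝕜) : Tensor 𝕜 d n :=
  fun x => ∏ k, u k (x k)

theorem tmap_eq_prodTensor (p : Vecr 𝕜 d 1 n) : tmap p = prodTensor (p 0) := by
  ext x
  simp [tmap, prodTensor]

theorem star_prodTensor_dotProduct (u v : (k : Fin d) → Fin (n k) → 𝕜) :
    star (prodTensor u) ⬝ᵥ prodTensor v = ∏ k, star (u k) ⬝ᵥ v k := by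
  simp only [dotProduct, prodTensor, Pi.star_apply, star_prod, ← prod_mul_distrib]
  exact (Fintype.prod_sum fun k j => star (u k j) * v k j).symm

theorem prodTensor_update_zero (u : (k : Fin d) → Fin (n k) → 𝕜) (k : Fin d) :
    prodTensor (Function.update u k 0) = 0 := by
  ext x
  exact prod_eq_zero (mem_univ k) (by simp)

theorem prod_update_apply (u : (k : Fin d) → Fin (n k) → 𝕜) (k : Fin d)
    (w : Fin (n k) → 𝕜) (x : (k : Fin d) → Fin (n k)) :
    ∏ l, Function.update u k w l (x l) = w (x k) * ∏ l ∈ univ.erase k, u l (x l) := by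
  rw [prod_congr rfl fun l _ =>
      Function.apply_update (fun l (f : Fin (n l) → 𝕜) => f (x l)) u k w l,
    prod_update_of_mem (mem_univ k), sdiff_singleton_eq_erase]

theorem star_prodTensor_update_dotProduct {a : (k : Fin d) → Fin (n k) → 𝕜}
    (ha : ∀ l, star (a l) ⬝ᵥ a l = 1) (k : Fin d) (u v : Fin (n k) → 𝕜) :
    star (prodTensor (Function.update a k u)) ⬝ᵥ prodTensor (Function.update a k v)
      = star u ⬝ᵥ v := by
  rw [star_prodTensor_dotProduct, Fintype.prod_eq_single k fun l hl => by
    rw [Function.update_of_ne hl, Function.update_of_ne hl, ha], Function.update_self,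
    Function.update_self]

theorem prodTensor_update_smul (u : (k : Fin d) → Fin (n k) → 𝕜) (k : Fin d) (c : 𝕜) :
    prodTensor (Function.update u k (c • u k)) = c • prodTensor u := by
  ext x
  simp only [prodTensor, Pi.smul_apply, smul_eq_mul]
  rw [prod_update_apply, ← mul_prod_erase univ _ (mem_univ k), Pi.smul_apply, smul_eq_mul,
    mul_assoc]

theorem tnorm_prodTensor (u : (k : Fin d) → Fin (n k) → 𝕜) :
    tnorm (prodTensor u) = ∏ k, eunorm (u k) := by
  simp only [tnorm, eunorm, prodTensor, norm_prod, ← prod_pow]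
  rw [← Fintype.prod_sum fun k j => ‖u k j‖ ^ 2, Real.sqrt_prod _ fun k _ => by positivity]

theorem terracini_mulVec_flat (p u : Vecr 𝕜 d r n) :
    terracini p *ᵥ flat u = ∑ i, ∑ k, prodTensor (Function.update (p i) k (u i k)) := by
  ext x
  simp only [mulVec, dotProduct, Fintype.sum_prod_type, Fintype.sum_sigma, Finset.sum_apply]
  refine sum_congr rfl fun i _ => sum_congr rfl fun k _ => ?_
  simp only [terracini, flat, of_apply, ite_mul, one_mul, zero_mul, sum_ite_eq, mem_univ, if_true,
    prodTensor]
  rw [prod_update_apply, mul_comm]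

theorem terracini_smul (c : 𝕜) (p : Vecr 𝕜 d r n) :
    terracini (c • p) = c ^ (d - 1) • terracini p := by
  ext x q
  simp only [terracini, of_apply, Matrix.smul_apply, Pi.smul_apply, smul_eq_mul,
    prod_mul_distrib, prod_const, card_erase_of_mem (mem_univ _), card_univ, Fintype.card_fin]
  ring

theorem star_flat_dotProduct (u v : Vecr 𝕜 d r n) :
    star (flat u) ⬝ᵥ flat v = ∑ i, ∑ k, star (u i k) ⬝ᵥ v i k := by
  simp [dotProduct, flat, Fintype.sum_prod_type, Fintype.sum_sigma]

theorem sum_star_single_dotProduct {k : Fin d} (u : Fin (n k) → 𝕜)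
    (v : (l : Fin d) → Fin (n l) → 𝕜) :
    ∑ l, star (Pi.single (M := fun l => Fin (n l) → 𝕜) k u l) ⬝ᵥ v l = star u ⬝ᵥ v k := by
  rw [Fintype.sum_eq_single k fun l hl => by
      rw [Pi.single_eq_of_ne hl, star_zero, zero_dotProduct],
    Pi.single_eq_same]

end ProductTensors

section RankOne

variable [∀ k, NeZero (n k)] {B : (k : Fin d) → Matrix (Fin (n k)) (Fin (n k)) 𝕜}
  {C : Matrix (Fin d) (Fin d) 𝕜}

def rankOneEigvec (B : (k : Fin d) → Matrix (Fin (n k)) (Fin (n k)) 𝕜)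
    (C : Matrix (Fin d) (Fin d) 𝕜) (k : Fin d) (j : Fin (n k)) :
    (l : Fin d) → Fin (n l) → 𝕜 :=
  if j = 0 then fun l => C k l • B l 0 else Pi.single k (B k j)

def rankOneEigenbasis (B : (k : Fin d) → Matrix (Fin (n k)) (Fin (n k)) 𝕜)
    (C : Matrix (Fin d) (Fin d) 𝕜) : Matrix (ColIdx d 1 n) (ColIdx d 1 n) 𝕜 :=
  of fun q' q => flat (fun _ => rankOneEigvec B C q.2.1 q.2.2) q'

theorem sum_star_rankOneEigvec_dotProduct (hB : ∀ k, B k * (B k)ᴴ = 1) (hC : C * Cᴴ = 1)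
    (k k' : Fin d) (j : Fin (n k)) (j' : Fin (n k')) :
    ∑ l, star (rankOneEigvec B C k j l) ⬝ᵥ rankOneEigvec B C k' j' l
      = if (⟨k, j⟩ : Σ k, Fin (n k)) = ⟨k', j'⟩ then 1 else 0 := by
  have hrow := fun k => star_row_dotProduct_row (hB k)
  have hperp : ∀ k (j : Fin (n k)), j ≠ 0 → star (B k j) ⬝ᵥ B k 0 = 0 := fun k j hj => by
    rw [hrow, one_apply_ne hj]
  by_cases hj : j = 0 <;> by_cases hj' : j' = 0 <;>
    simp only [rankOneEigvec, if_true, hj, hj', if_false]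
  · have hCrow : ∑ l, star (C k l • B l 0) ⬝ᵥ (C k' l • B l 0)
        = (1 : Matrix (Fin d) (Fin d) 𝕜) k' k := by
      calc _ = ∑ l, C k' l * star (C k l) := sum_congr rfl fun l _ => by
              rw [star_smul, smul_dotProduct, dotProduct_smul, hrow, one_apply_eq, smul_eq_mul,
                smul_eq_mul, mul_one, mul_comm]
        _ = _ := by rw [← hC]; rfl
    rw [hCrow, one_apply]
    rcases eq_or_ne k k' with rfl | hk <;> simp [*, Ne.symm]
  · simp_rw [star_dotProduct (C k _ • B _ 0)]
    rw [← star_sum, sum_star_single_dotProduct, dotProduct_smul, hperp _ _ hj', smul_zero,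
      star_zero, if_neg]
    rintro ⟨⟩
    exact hj' rfl
  · rw [sum_star_single_dotProduct, dotProduct_smul, hperp _ _ hj, smul_zero, if_neg]
    rintro ⟨⟩
    exact hj rfl
  · rw [sum_star_single_dotProduct]
    rcases eq_or_ne k k' with rfl | hk
    · simp [hrow, one_apply]
    · rw [Pi.single_eq_of_ne hk, dotProduct_zero, if_neg]
      rintro ⟨⟩
      exact hk rfl

theorem rankOneEigenbasis_unitary (hB : ∀ k, B k * (B k)ᴴ = 1) (hC : C * Cᴴ = 1) :
    (rankOneEigenbasis B C)ᴴ * rankOneEigenbasis B C = 1 := by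
  ext ⟨i, k, j⟩ ⟨i', k', j'⟩
  have hentry :
      ((rankOneEigenbasis B C)ᴴ * rankOneEigenbasis B C) (i, ⟨k, j⟩) (i', ⟨k', j'⟩)
        = star (flat fun _ => rankOneEigvec B C k j) ⬝ᵥ flat fun _ => rankOneEigvec B C k' j' :=
    rfl
  rw [hentry, star_flat_dotProduct, Fin.sum_univ_one, sum_star_rankOneEigvec_dotProduct hB hC,
    Subsingleton.elim i i', one_apply]
  simp only [Prod.mk.injEq, true_and]

theorem terracini_mulVec_rankOneEigvec (k : Fin d) (j : Fin (n k)) :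
    terracini (fun _ : Fin 1 => fun l => B l 0) *ᵥ flat (fun _ => rankOneEigvec B C k j)
      = if j = 0 then (∑ l, C k l) • prodTensor (fun l => B l 0)
        else prodTensor (Function.update (fun l => B l 0) k (B k j)) := by
  rw [terracini_mulVec_flat, Fin.sum_univ_one]
  by_cases hj : j = 0
  · simp only [rankOneEigvec, if_pos hj, sum_smul]
    exact sum_congr rfl fun l _ => prodTensor_update_smul (fun l => B l 0) l (C k l)
  · simp only [rankOneEigvec, if_neg hj]
    rw [Fintype.sum_eq_single k fun l hl => by rw [Pi.single_eq_of_ne hl, prodTensor_update_zero],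
      Pi.single_eq_same]

variable [NeZero d]

def rankOneSpectrum (x y : ℝ) (q : ColIdx d 1 n) : ℝ :=
  if q.2.2 = 0 then (if q.2.1 = 0 then x else 0) else y

theorem sum_row_eq_of_row_zero_const (hC : C * Cᴴ = 1)
    (hC0 : C 0 = fun _ => (((√d)⁻¹ : ℝ) : 𝕜)) (k : Fin d) :
    ∑ l, C k l = if k = 0 then (√d : 𝕜) else 0 := by
  have hd : (√d : 𝕜) ≠ 0 := by simp [NeZero.ne d]
  have h := star_row_dotProduct_row hC 0 k
  rw [hC0, one_apply] at h
  simp only [dotProduct, Pi.star_apply, RCLike.star_def, RCLike.conj_ofReal, ← mul_sum] at h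
  have hsqrt : (√d : 𝕜) * (((√d)⁻¹ : ℝ) : 𝕜) = 1 := by
    rw [RCLike.ofReal_inv]
    exact mul_inv_cancel₀ hd
  rw [← one_mul (∑ l, C k l), ← hsqrt, mul_assoc, h]
  by_cases hk : k = 0 <;> simp [hk, eq_comm (a := (0 : Fin d))]

theorem star_terracini_mulVec_rankOneEigvec_dotProduct (hB : ∀ k, B k * (B k)ᴴ = 1)
    (hC : C * Cᴴ = 1) (hC0 : C 0 = fun _ => (((√d)⁻¹ : ℝ) : 𝕜))
    (k k' : Fin d) (j : Fin (n k)) (j' : Fin (n k')) :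
    star (terracini (fun _ : Fin 1 => fun l => B l 0) *ᵥ flat fun _ => rankOneEigvec B C k j)
        ⬝ᵥ (terracini (fun _ : Fin 1 => fun l => B l 0) *ᵥ flat fun _ => rankOneEigvec B C k' j')
      = if (⟨k, j⟩ : Σ k, Fin (n k)) = ⟨k', j'⟩ then
          ((rankOneSpectrum √d 1 ((0 : Fin 1), (⟨k, j⟩ : Σ k, Fin (n k))) ^ 2 : ℝ) : 𝕜)
        else 0 := by
  have hrow := fun k => star_row_dotProduct_row (hB k)
  have hperp : ∀ k (j : Fin (n k)), j ≠ 0 → star (B k j) ⬝ᵥ B k 0 = 0 := fun k j hj => by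
    rw [hrow, one_apply_ne hj]
  have hsum := sum_row_eq_of_row_zero_const hC hC0
  have hunit : ∀ l, star (B l 0) ⬝ᵥ B l 0 = 1 := fun l => by rw [hrow, one_apply_eq]
  simp only [terracini_mulVec_rankOneEigvec, rankOneSpectrum]
  by_cases hj : j = 0 <;> by_cases hj' : j' = 0 <;>
    simp only [if_true, hj, hj', if_false]
  · have hA : star (prodTensor fun l => B l 0) ⬝ᵥ prodTensor (fun l => B l 0) = 1 := by
      simpa [hunit k] using star_prodTensor_update_dotProduct hunit k (B k 0) (B k 0)
    rw [star_smul, smul_dotProduct, dotProduct_smul, hA, hsum, hsum]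
    rcases eq_or_ne k k' with rfl | hk
    · have hd : ((√d : ℝ) : 𝕜) * (√d : ℝ) = d := by
        rw [← RCLike.ofReal_mul, Real.mul_self_sqrt (Nat.cast_nonneg _), RCLike.ofReal_natCast]
      by_cases hk0 : k = 0 <;> simp [hk0, hd]
    · rw [if_neg fun h => hk (congrArg Sigma.fst h)]
      by_cases hk0 : k = 0
      · subst hk0
        simp [Ne.symm hk]
      · simp [hk0]
  · rw [star_smul, smul_dotProduct, star_prodTensor_dotProduct, prod_eq_zero (mem_univ k'),
      smul_zero, if_neg]
    · rintro ⟨⟩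
      exact hj' rfl
    · rw [Function.update_self, hrow, one_apply_ne (Ne.symm hj')]
  · rw [dotProduct_smul, star_prodTensor_dotProduct, prod_eq_zero (mem_univ k), smul_zero, if_neg]
    · rintro ⟨⟩
      exact hj rfl
    · rw [Function.update_self, hperp _ _ hj]
  · rcases eq_or_ne k k' with rfl | hk
    · rw [star_prodTensor_update_dotProduct hunit, hrow, one_apply]
      simp
    · rw [star_prodTensor_dotProduct, prod_eq_zero (mem_univ k), if_neg]
      · exact fun h => hk (congrArg Sigma.fst h)
      · rw [Function.update_self, Function.update_of_ne hk, hperp _ _ hj]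

theorem gram_terracini_mul_rankOneEigenbasis (hB : ∀ k, B k * (B k)ᴴ = 1) (hC : C * Cᴴ = 1)
    (hC0 : C 0 = fun _ => (((√d)⁻¹ : ℝ) : 𝕜)) :
    (terracini (fun _ : Fin 1 => fun l => B l 0) * rankOneEigenbasis B C)ᴴ *
        (terracini (fun _ : Fin 1 => fun l => B l 0) * rankOneEigenbasis B C)
      = diagonal fun q => ((rankOneSpectrum √d 1 q ^ 2 : ℝ) : 𝕜) := by
  ext ⟨i, k, j⟩ ⟨i', k', j'⟩
  rw [Subsingleton.elim i 0, Subsingleton.elim i' 0]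
  refine (star_terracini_mulVec_rankOneEigvec_dotProduct hB hC hC0 k k' j j').trans ?_
  rw [diagonal_apply]
  simp only [Prod.mk.injEq, true_and]

theorem map_rankOneSpectrum (x y : ℝ) :
    univ.val.map (rankOneSpectrum (n := n) x y)
      = {x} + (d - 1) • {0} + (∑ k, (n k - 1)) • {y} := by
  rw [← Multiset.sum_map_singleton (univ.val.map _), Multiset.map_map, sum_map_val,
    Fintype.sum_prod_type, Fin.sum_univ_one, Fintype.sum_sigma]
  simp only [Function.comp_apply, rankOneSpectrum]
  rw [Fintype.sum_congr _ _ fun k =>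
      sum_singleton_ite_eq (0 : Fin (n k)) (if k = 0 then x else 0) y,
    sum_add_distrib, sum_singleton_ite_eq, ← sum_smul]
  simp only [Fintype.card_fin]

theorem rankOneSpectrum_nonneg {x y : ℝ} (hx : 0 ≤ x) (hy : 0 ≤ y) (q : ColIdx d 1 n) :
    0 ≤ rankOneSpectrum x y q := by
  unfold rankOneSpectrum
  positivity

theorem singularValues_terracini_smul_rankOne {a : (k : Fin d) → Fin (n k) → 𝕜}
    (ha : ∀ k, star (a k) ⬝ᵥ a k = 1) {c : ℝ} (hc : 0 ≤ c) :
    singularValues (terracini ((c : 𝕜) • fun _ : Fin 1 => a))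
      = {c ^ (d - 1) * √d} + (d - 1) • {0} + (∑ k, (n k - 1)) • {c ^ (d - 1)} := by
  choose B hB hBa using fun k => exists_orthonormal_rows (ha k) 0
  have hconst :
      star (fun _ : Fin d => (((√d)⁻¹ : ℝ) : 𝕜)) ⬝ᵥ (fun _ => (((√d)⁻¹ : ℝ) : 𝕜)) = 1 := by
    have hd : (d : ℝ) ≠ 0 := Nat.cast_ne_zero.mpr (NeZero.ne d)
    simp only [dotProduct, Pi.star_apply, RCLike.star_def, RCLike.conj_ofReal,
      ← RCLike.ofReal_mul, ← RCLike.ofReal_sum, sum_const, card_univ, Fintype.card_fin,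
      nsmul_eq_mul]
    rw [← mul_inv, Real.mul_self_sqrt (Nat.cast_nonneg _), mul_inv_cancel₀ hd,
      RCLike.ofReal_one]
  obtain ⟨C, hC, hC0⟩ := exists_orthonormal_rows hconst 0
  obtain rfl : a = fun l => B l 0 := funext fun l => (hBa l).symm
  rw [terracini_smul, ← map_rankOneSpectrum]
  refine singularValues_eq_of_mul_unitary _ (rankOneEigenbasis_unitary hB hC)
    (rankOneSpectrum_nonneg (by positivity) (by positivity)) ?_
  rw [Matrix.smul_mul, conjTranspose_smul, Matrix.smul_mul, Matrix.mul_smul,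
    gram_terracini_mul_rankOneEigenbasis hB hC hC0, smul_smul, ← diagonal_smul]
  have hs : ∀ q, rankOneSpectrum (c ^ (d - 1) * √d) (c ^ (d - 1)) q
      = c ^ (d - 1) * rankOneSpectrum (n := n) √d 1 q := by
    intro q
    unfold rankOneSpectrum
    split_ifs <;> simp
  congr 1
  funext q
  rw [hs, Pi.smul_apply, smul_eq_mul, RCLike.star_def, ← RCLike.ofReal_pow, RCLike.conj_ofReal]
  push_cast
  ring

end RankOne

section Norms

theorem star_dotProduct_self_eq_eunorm_sq {ι : Type*} [Fintype ι] (v : ι → 𝕜) :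
    star v ⬝ᵥ v = ((eunorm v ^ 2 : ℝ) : 𝕜) := by
  rw [eunorm, Real.sq_sqrt (by positivity)]
  simp [dotProduct, RCLike.conj_mul]

theorem eunorm_smul {ι : Type*} [Fintype ι] (c : 𝕜) (v : ι → 𝕜) :
    eunorm (c • v) = ‖c‖ * eunorm v := by
  simp only [eunorm, Pi.smul_apply, smul_eq_mul, norm_mul, mul_pow, ← mul_sum]
  rw [Real.sqrt_mul (by positivity), Real.sqrt_sq (norm_nonneg c)]

theorem vnorm_eq_sqrt_sum_eunorm_sq (p : Vecr 𝕜 d r n) :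
    vnorm p = √(∑ i, ∑ k, eunorm (p i k) ^ 2) := by
  simp only [vnorm, eunorm, Real.sq_sqrt (sum_nonneg fun _ _ => sq_nonneg _)]

variable {a : (k : Fin d) → Fin (n k) → 𝕜} {c : ℝ}

theorem tnorm_tmap_smul_rankOne (ha : ∀ k, eunorm (a k) = 1) (hc : 0 ≤ c) :
    tnorm (tmap ((c : 𝕜) • fun _ : Fin 1 => a)) = c ^ d := by
  simp only [tmap_eq_prodTensor, tnorm_prodTensor, Pi.smul_apply, eunorm_smul, ha,
    RCLike.norm_ofReal, abs_of_nonneg hc, mul_one, prod_const, card_univ, Fintype.card_fin]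

theorem vnorm_smul_rankOne (ha : ∀ k, eunorm (a k) = 1) (hc : 0 ≤ c) :
    vnorm ((c : 𝕜) • fun _ : Fin 1 => a) = c * √d := by
  simp only [vnorm_eq_sqrt_sum_eunorm_sq, Pi.smul_apply, eunorm_smul, ha, RCLike.norm_ofReal,
    abs_of_nonneg hc, mul_one, sum_const, card_univ, Fintype.card_fin, nsmul_eq_mul,
    Nat.cast_one, one_mul]
  rw [Real.sqrt_mul (Nat.cast_nonneg d), Real.sqrt_sq hc, mul_comm]

end Norms

theorem nthSV_terracini_smul_rankOne [NeZero d] [∀ k, NeZero (n k)]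
    {a : (k : Fin d) → Fin (n k) → 𝕜} (ha : ∀ k, eunorm (a k) = 1) {c : ℝ} (hc : 0 ≤ c)
    (hS : 1 ≤ ∑ k, (n k - 1)) :
    nthSV (terracini ((c : 𝕜) • fun _ : Fin 1 => a)) (∑ k, (n k - 1) + 1) = c ^ (d - 1) := by
  have hunit : ∀ k, star (a k) ⬝ᵥ a k = 1 := fun k => by
    rw [star_dotProduct_self_eq_eunorm_sq, ha, one_pow, RCLike.ofReal_one]
  have hd : 1 ≤ √(d : ℝ) := Real.one_le_sqrt.mpr (Nat.one_le_cast.mpr NeZero.one_le)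
  exact nthSV_eq_of_singularValues_eq _ (by positivity)
    (le_mul_of_one_le_right (by positivity) hd) hS (singularValues_terracini_smul_rankOne hunit hc)

theorem rank_one_condition_number_general [NeZero d]
    (hn : ∀ k, 2 ≤ n k)
    (a : (k : Fin d) → Fin (n k) → 𝕜) (ha : ∀ k, eunorm (a k) = 1)
    (α : ℝ) (hα : 0 < α)
    (p : Vecr 𝕜 d 1 n)
    (hp : ∀ (i : Fin 1) (k : Fin d) (j : Fin (n k)),
      p i k j = ((α ^ ((1 : ℝ) / (d : ℝ)) : ℝ) : 𝕜) * a k j)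
    (N : ℕ) (hN : N = (∑ k, (n k - 1)) + 1) :
    nthSV (terracini p) N = α ^ (1 - (1 : ℝ) / (d : ℝ))
    ∧ (nthSV (terracini p) N)⁻¹ = α ^ ((1 : ℝ) / (d : ℝ) - 1)
    ∧ (nthSV (terracini p) N)⁻¹ * (tnorm (tmap p) / vnorm p) = 1 / Real.sqrt d := by
  have : ∀ k, NeZero (n k) := fun k => ⟨by have := hn k; omega⟩
  have hS : 1 ≤ ∑ k, (n k - 1) :=
    le_trans (by have := hn 0; omega) (single_le_sum (fun k _ => Nat.zero_le _) (mem_univ 0))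
  set β := α ^ ((1 : ℝ) / d)
  have hβ : 0 < β := Real.rpow_pos_of_pos hα _
  obtain rfl : p = (β : 𝕜) • fun _ => a := funext fun i => funext fun k => funext (hp i k)
  rw [hN, nthSV_terracini_smul_rankOne ha hβ.le hS, tnorm_tmap_smul_rankOne ha hβ.le,
    vnorm_smul_rankOne ha hβ.le]
  have hβ_pred : β ^ (d - 1) = α ^ (1 - (1 : ℝ) / d) := by
    have hd : (d : ℝ) ≠ 0 := Nat.cast_ne_zero.mpr (NeZero.ne d)
    rw [← Real.rpow_natCast, ← Real.rpow_mul hα.le, Nat.cast_sub NeZero.one_le, Nat.cast_one]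
    field_simp
  refine ⟨hβ_pred, by rw [hβ_pred, ← Real.rpow_neg hα.le, neg_sub], ?_⟩
  have hd : √(d : ℝ) ≠ 0 := Real.sqrt_ne_zero'.mpr (Nat.cast_pos.mpr (Nat.pos_of_neZero d))
  rw [← pow_sub_one_mul (NeZero.ne d)]
  field_simp

/-- a rank-1 tensor `A = α a^{(1)} ⊗ ⋯ ⊗ a^{(d)}` with unit-norm factors
and `α > 0` has norm-balanced absolute condition number `α^{1/d−1}` and norm-balanced
relative condition number `d^{-1/2}`. -/
theorem rank_one_condition_number [NeZero d]
    (hd : 2 ≤ d) (hn : ∀ k, 2 ≤ n k)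
    (a : (k : Fin d) → Fin (n k) → 𝕜) (ha : ∀ k, eunorm (a k) = 1)
    (α : ℝ) (hα : 0 < α)
    (p : Vecr 𝕜 d 1 n)
    (hp : ∀ (i : Fin 1) (k : Fin d) (j : Fin (n k)),
      p i k j = ((α ^ ((1 : ℝ) / (d : ℝ)) : ℝ) : 𝕜) * a k j)
    (N : ℕ) (hN : N = (∑ k, (n k - 1)) + 1) :
    nthSV (terracini p) N = α ^ (1 - (1 : ℝ) / (d : ℝ))
    ∧ (nthSV (terracini p) N)⁻¹ = α ^ ((1 : ℝ) / (d : ℝ) - 1)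
    ∧ (nthSV (terracini p) N)⁻¹ * (tnorm (tmap p) / vnorm p) = 1 / Real.sqrt d :=
  rank_one_condition_number_general hn a ha α hα p hp N hN

end TensorCond
end
end

section
/- Let b_i = (a_i^{(1)}, …, a_i^{(d)}), i = 1, …, r, be representatives such that for every pair i < j there exist three distinct indices k_1 < k_2 < k_3 in {1, …, d} with ⟨a_i^{(k_1)}, a_j^{(k_1)}⟩ = ⟨a_i^{(k_2)}, a_j^{(k_2)}⟩ = ⟨a_i^{(k_3)}, a_j^{(k_3)}⟩ = 0 (weak 3-orthogonality). Then the blocks of Terracini's matrix are pairwise orthogonal: T_i^H T_j = 0 for all i ≠ j, so the Gram matrix T_p^H T_p = diag(T_1^H T_1, …, T_r^H T_r) is block diagonal, and the multiset of singular values of T_p is the union of the multisets of singular values of T_1, …, T_r. -/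
/-!
An entry of `T_iᴴ T_j` is the inner product of two elementary tensors, so it factors as the
product over the `d` modes of the inner products of their factors. The column indices of the
entry replace the factors of only two modes by unit vectors, so a third mode in which
`a_i` and `a_j` are orthogonal makes the product vanish. Hence, after reordering the columns,
the Gram matrix `T_pᴴ T_p` is block diagonal; its characteristic polynomial is the product of
those of the `T_iᴴ T_i`, and the squared singular values are its roots.
-/

open scoped BigOperators
open scoped Matrix

noncomputable section

theorem Multiset.map_finset_sum {α β ι : Type*} (f : α → β) (s : Finset ι)
    (m : ι → Multiset α) : (∑ i ∈ s, m i).map f = ∑ i ∈ s, (m i).map f :=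
  map_sum (Multiset.mapAddMonoidHom f) m s

theorem Finset.sum_star_prod_mul_prod {ι R : Type*} [Fintype ι] [DecidableEq ι] {κ : ι → Type*}
    [∀ i, Fintype (κ i)] [CommSemiring R] [StarRing R] (u v : ∀ i, κ i → R) :
    ∑ x : ∀ i, κ i, star (∏ i, u i (x i)) * ∏ i, v i (x i) = ∏ i, ∑ t, star (u i t) * v i t := by
  simp only [Fintype.prod_sum, star_prod, Finset.prod_mul_distrib]

namespace Matrix

open Polynomial

theorem charmatrix_blockDiagonal {R m o : Type*} [CommRing R] [Fintype m] [DecidableEq m]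
    [Fintype o] [DecidableEq o] (B : o → Matrix m m R) :
    charmatrix (blockDiagonal B) = blockDiagonal fun k => charmatrix (B k) := by
  simp only [charmatrix, scalar_apply, RingHom.mapMatrix_apply]
  rw [blockDiagonal_map _ _ (map_zero C), ← blockDiagonal_diagonal fun _ _ => X, ← blockDiagonal_sub]
  rfl

theorem charpoly_blockDiagonal {R m o : Type*} [CommRing R] [Fintype m] [DecidableEq m]
    [Fintype o] [DecidableEq o] (B : o → Matrix m m R) :
    (blockDiagonal B).charpoly = ∏ k, (B k).charpoly := by
  rw [charpoly, charmatrix_blockDiagonal, det_blockDiagonal]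
  rfl

theorem conjTranspose_mul_eq_zero_comm {α l m n : Type*} [Fintype m] [NonUnitalSemiring α]
    [StarRing α] {A : Matrix m l α} {B : Matrix m n α} (h : Aᴴ * B = 0) : Bᴴ * A = 0 := by
  rw [← conjTranspose_conjTranspose (Bᴴ * A), conjTranspose_mul, conjTranspose_conjTranspose, h,
    conjTranspose_zero]

theorem of_dite_fst_eq_reindex_blockDiagonal {α m o : Type*} [Zero α] [DecidableEq o]
    (B : o → Matrix m m α) :
    (of fun x y : o × m => if _ : x.1 = y.1 then B x.1 x.2 y.2 else 0) =
      reindex (Equiv.prodComm _ _) (Equiv.prodComm _ _) (blockDiagonal B) := by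
  ext ⟨i, q⟩ ⟨j, q'⟩
  by_cases hij : i = j
  · subst hij
    simp
  · simpa [hij] using (blockDiagonal_apply_ne B q q' hij).symm

theorem IsHermitian.eigenvalues_eq_sum_of_charpoly_eq_prod {𝕜 l m o : Type*} [RCLike 𝕜]
    [Fintype l] [DecidableEq l] [Fintype m] [DecidableEq m] [Fintype o]
    {A : Matrix l l 𝕜} (hA : A.IsHermitian) {B : o → Matrix m m 𝕜}
    (hB : ∀ k, (B k).IsHermitian) (h : A.charpoly = ∏ k, (B k).charpoly) :
    Finset.univ.val.map hA.eigenvalues = ∑ k, Finset.univ.val.map (hB k).eigenvalues := by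
  apply Multiset.map_injective (RCLike.ofReal_injective (K := 𝕜))
  rw [Multiset.map_finset_sum, Multiset.map_map, ← hA.roots_charpoly_eq_eigenvalues, h,
    roots_prod _ _ (Finset.prod_ne_zero_iff.mpr fun k _ => (B k).charpoly_monic.ne_zero)]
  exact Finset.sum_congr rfl fun k _ => by
    rw [(hB k).roots_charpoly_eq_eigenvalues, Multiset.map_map]

end Matrix

namespace TensorCond

variable {𝕜 : Type*} [RCLike 𝕜]
variable {d r : ℕ} {n : Fin d → ℕ}

open Matrix

theorem singularValues_eq_map_sqrt {m l : Type*} [Fintype m] [Fintype l] [DecidableEq l]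
    (M : Matrix m l 𝕜) :
    singularValues M =
      (Finset.univ.val.map (isHermitian_conjTranspose_mul_self M).eigenvalues).map Real.sqrt :=
  (Multiset.map_map _ _ _).symm

theorem singularValues_eq_sum_of_charpoly_eq_prod {m l m' l' o : Type*} [Fintype m] [Fintype l]
    [DecidableEq l] [Fintype m'] [Fintype l'] [DecidableEq l'] [Fintype o]
    (M : Matrix m l 𝕜) (N : o → Matrix m' l' 𝕜)
    (h : (Mᴴ * M).charpoly = ∏ k, ((N k)ᴴ * N k).charpoly) :
    singularValues M = ∑ k, singularValues (N k) := by
  have hM := (isHermitian_conjTranspose_mul_self M).eigenvalues_eq_sum_of_charpoly_eq_prod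
    (fun k => isHermitian_conjTranspose_mul_self (N k)) h
  simp only [singularValues_eq_map_sqrt, hM, Multiset.map_finset_sum]

theorem terraciniBlock_apply_eq_prod_update (p : Vecr 𝕜 d r n) (i : Fin r)
    (x : (k : Fin d) → Fin (n k)) (k : Fin d) (t : Fin (n k)) :
    terraciniBlock p i x ⟨k, t⟩ = ∏ l, Function.update (p i) k (Pi.single t 1) l (x l) := by
  rw [← Finset.mul_prod_erase _ _ (Finset.mem_univ k)]
  refine congrArg₂ _ (by simp [Pi.single_apply]) (Finset.prod_congr rfl fun l hl => ?_)
  rw [Function.update_of_ne (Finset.ne_of_mem_erase hl)]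

theorem terraciniBlock_conjTranspose_mul_apply (p : Vecr 𝕜 d r n) (i j : Fin r) (k k' : Fin d)
    (t : Fin (n k)) (t' : Fin (n k')) :
    ((terraciniBlock p i)ᴴ * terraciniBlock p j) ⟨k, t⟩ ⟨k', t'⟩ =
      ∏ l, ∑ s, star (Function.update (p i) k (Pi.single t 1) l s) *
        Function.update (p j) k' (Pi.single t' 1) l s := by
  simp only [mul_apply, conjTranspose_apply, terraciniBlock_apply_eq_prod_update]
  exact Finset.sum_star_prod_mul_prod _ _

theorem terraciniBlock_conjTranspose_mul_apply_eq_zero (p : Vecr 𝕜 d r n) {i j : Fin r}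
    {l k k' : Fin d} (hk : l ≠ k) (hk' : l ≠ k')
    (h : ∑ s, (starRingEnd 𝕜) (p i l s) * p j l s = 0) (t : Fin (n k)) (t' : Fin (n k')) :
    ((terraciniBlock p i)ᴴ * terraciniBlock p j) ⟨k, t⟩ ⟨k', t'⟩ = 0 := by
  rw [terraciniBlock_conjTranspose_mul_apply]
  refine Finset.prod_eq_zero (Finset.mem_univ l) ?_
  simpa only [Function.update_of_ne hk, Function.update_of_ne hk', starRingEnd_apply] using h

theorem terraciniBlock_conjTranspose_mul_eq_zero (p : Vecr 𝕜 d r n) {i j : Fin r}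
    {k₁ k₂ k₃ : Fin d} (h₁₂ : k₁ ≠ k₂) (h₁₃ : k₁ ≠ k₃) (h₂₃ : k₂ ≠ k₃)
    (o₁ : ∑ s, (starRingEnd 𝕜) (p i k₁ s) * p j k₁ s = 0)
    (o₂ : ∑ s, (starRingEnd 𝕜) (p i k₂ s) * p j k₂ s = 0)
    (o₃ : ∑ s, (starRingEnd 𝕜) (p i k₃ s) * p j k₃ s = 0) :
    (terraciniBlock p i)ᴴ * terraciniBlock p j = 0 := by
  ext ⟨k, t⟩ ⟨k', t'⟩
  -- the three distinct indices `k₁, k₂, k₃` cannot all lie in `{k, k'}`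
  by_cases e₁ : k₁ ≠ k ∧ k₁ ≠ k'
  · exact terraciniBlock_conjTranspose_mul_apply_eq_zero p e₁.1 e₁.2 o₁ t t'
  by_cases e₂ : k₂ ≠ k ∧ k₂ ≠ k'
  · exact terraciniBlock_conjTranspose_mul_apply_eq_zero p e₂.1 e₂.2 o₂ t t'
  have e₃ : k₃ ≠ k ∧ k₃ ≠ k' := by grind
  exact terraciniBlock_conjTranspose_mul_apply_eq_zero p e₃.1 e₃.2 o₃ t t'

theorem terracini_gram_apply (p : Vecr 𝕜 d r n) (x y : ColIdx d r n) :
    ((terracini p)ᴴ * terracini p) x y =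
      ((terraciniBlock p x.1)ᴴ * terraciniBlock p y.1) x.2 y.2 :=
  rfl

theorem terracini_gram_eq_of_orthogonal (p : Vecr 𝕜 d r n)
    (h : ∀ i j, i ≠ j → (terraciniBlock p i)ᴴ * terraciniBlock p j = 0) :
    (terracini p)ᴴ * terracini p = of fun x y : ColIdx d r n =>
      if _ : x.1 = y.1 then ((terraciniBlock p x.1)ᴴ * terraciniBlock p x.1) x.2 y.2 else 0 := by
  ext ⟨i, q⟩ ⟨j, q'⟩
  rw [terracini_gram_apply, of_apply]
  split_ifs with hij
  · rw [← hij]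
  · rw [h i j hij, Matrix.zero_apply]

theorem weak3_gram_block_diagonal_general
    (p : Vecr 𝕜 d r n)
    (horth : ∀ i j : Fin r, i < j →
      ∃ k₁ k₂ k₃ : Fin d, k₁ < k₂ ∧ k₂ < k₃ ∧
        (∑ l, (starRingEnd 𝕜) (p i k₁ l) * p j k₁ l) = 0 ∧
        (∑ l, (starRingEnd 𝕜) (p i k₂ l) * p j k₂ l) = 0 ∧
        (∑ l, (starRingEnd 𝕜) (p i k₃ l) * p j k₃ l) = 0) :
    (∀ i j : Fin r, i ≠ j → (terraciniBlock p i)ᴴ * terraciniBlock p j = 0)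
    ∧ (terracini p)ᴴ * terracini p
        = Matrix.of (fun x y : ColIdx d r n =>
            if h : x.1 = y.1 then
              ((terraciniBlock p x.1)ᴴ * terraciniBlock p x.1) x.2 y.2
            else 0)
    ∧ singularValues (terracini p) = ∑ i : Fin r, singularValues (terraciniBlock p i) := by
  have hblock : ∀ i j : Fin r, i < j → (terraciniBlock p i)ᴴ * terraciniBlock p j = 0 :=
    fun i j hij =>
      let ⟨_, _, _, h₁₂, h₂₃, o₁, o₂, o₃⟩ := horth i j hij
      terraciniBlock_conjTranspose_mul_eq_zero p h₁₂.ne (h₁₂.trans h₂₃).ne h₂₃.ne o₁ o₂ o₃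
  have horthBlocks : ∀ i j : Fin r, i ≠ j → (terraciniBlock p i)ᴴ * terraciniBlock p j = 0 :=
    fun i j hij => hij.lt_or_gt.elim (hblock i j) fun hji =>
      conjTranspose_mul_eq_zero_comm (hblock j i hji)
  have hgram := terracini_gram_eq_of_orthogonal p horthBlocks
  refine ⟨horthBlocks, hgram, singularValues_eq_sum_of_charpoly_eq_prod _ _ ?_⟩
  rw [hgram, of_dite_fst_eq_reindex_blockDiagonal fun i => (terraciniBlock p i)ᴴ * terraciniBlock p i,
    charpoly_reindex, charpoly_blockDiagonal]

/-- under weak 3-orthogonality, the blocks of Terracini's matrix are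
pairwise orthogonal (`Tᵢᴴ Tⱼ = 0` for `i ≠ j`), the Gram matrix `T_pᴴ T_p` is block
diagonal, and the multiset of singular values of `T_p` is the union of those of the
blocks `T₁, …, T_r`. -/
theorem weak3_gram_block_diagonal
    (hd : 3 ≤ d) (hn : ∀ k, 2 ≤ n k) (hr : 1 ≤ r)
    (p : Vecr 𝕜 d r n)
    (horth : ∀ i j : Fin r, i < j →
      ∃ k₁ k₂ k₃ : Fin d, k₁ < k₂ ∧ k₂ < k₃ ∧
        (∑ l, (starRingEnd 𝕜) (p i k₁ l) * p j k₁ l) = 0 ∧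
        (∑ l, (starRingEnd 𝕜) (p i k₂ l) * p j k₂ l) = 0 ∧
        (∑ l, (starRingEnd 𝕜) (p i k₃ l) * p j k₃ l) = 0) :
    (∀ i j : Fin r, i ≠ j → (terraciniBlock p i)ᴴ * terraciniBlock p j = 0)
    ∧ (terracini p)ᴴ * terracini p
        = Matrix.of (fun x y : ColIdx d r n =>
            if h : x.1 = y.1 then
              ((terraciniBlock p x.1)ᴴ * terraciniBlock p x.1) x.2 y.2
            else 0)
    ∧ singularValues (terracini p) = ∑ i : Fin r, singularValues (terraciniBlock p i) :=
  weak3_gram_block_diagonal_general p horth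

end TensorCond
end
end

section
/- Let a^{(1)}, …, a^{(d)} ∈ F^{n_1}, …, F^{n_d} and let K = [k^{(2)} ⋯ k^{(d)}] ∈ F^{(Σ+d) × (d−1)} be the kernel-basis matrix. Then its Gram matrix is K^H K = diag(‖a^{(2)}‖², ‖a^{(3)}‖², …, ‖a^{(d)}‖²) + ‖a^{(1)}‖² · 𝟙𝟙^T, where 𝟙 ∈ ℝ^{d−1} is the all-ones vector. Consequently, every eigenvalue of K^H K is at least min_{2≤k≤d} ‖a^{(k)}‖², so the smallest singular value of K satisfies ς_{d−1}(K) ≥ min_{2≤k≤d} ‖a^{(k)}‖; in particular, when all a^{(k)} ≠ 0, the Moore–Penrose pseudoinverse satisfies ‖K^†‖₂ ≤ ( min_{2≤k≤d} ‖a^{(k)}‖ )^{-1}. -/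
open scoped BigOperators
open scoped Matrix

noncomputable section

namespace TensorCond

variable {𝕜 : Type*} [RCLike 𝕜]
variable {d r : ℕ} {n : Fin d → ℕ}

/-!
Every column of `K` carries `a⁽¹⁾` in the first block and `-a⁽ᵏ⁾` in the `k`-th, so
`wᴴ KᴴK w = ∑ₖ ‖a⁽ᵏ⁾‖² |wₖ|² + ‖a⁽¹⁾‖² |∑ₖ wₖ|²`, and hence `‖K w‖ ≥ m ‖w‖` with
`m = min_{k ≥ 2} ‖a⁽ᵏ⁾‖`. Evaluated at unit eigenvectors this bounds the eigenvalues of `KᴴK`,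
hence the singular values of `K`. If `w = K† v` then `KᴴK w = Kᴴ v`, so
`‖K w‖² = ⟪K w, v⟫ ≤ ‖K w‖ ‖v‖`, and `m ‖w‖ ≤ ‖K w‖ ≤ ‖v‖`.
-/

section Euclidean

variable {ι : Type*} [Fintype ι]

theorem eunorm_eq_norm_toLp (v : ι → 𝕜) : eunorm v = ‖WithLp.toLp 2 v‖ :=
  (EuclideanSpace.norm_eq _).symm

theorem eunorm_nonneg (v : ι → 𝕜) : 0 ≤ eunorm v :=
  Real.sqrt_nonneg _

theorem eunorm_eq_zero {v : ι → 𝕜} : eunorm v = 0 ↔ v = 0 := by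
  rw [eunorm_eq_norm_toLp, norm_eq_zero, WithLp.toLp_eq_zero]

theorem eunorm_pos {v : ι → 𝕜} : 0 < eunorm v ↔ v ≠ 0 := by
  rw [(eunorm_nonneg v).lt_iff_ne', Ne, eunorm_eq_zero]

theorem eunorm_sq (v : ι → 𝕜) : eunorm v ^ 2 = ∑ i, ‖v i‖ ^ 2 :=
  Real.sq_sqrt (by positivity)

theorem ofReal_eunorm_sq (v : ι → 𝕜) : ((eunorm v ^ 2 : ℝ) : 𝕜) = star v ⬝ᵥ v := by
  rw [eunorm_sq, dotProduct]
  push_cast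
  exact Finset.sum_congr rfl fun i _ => (RCLike.conj_mul (v i)).symm

theorem eunorm_sq_eq_re_dotProduct (v : ι → 𝕜) : eunorm v ^ 2 = RCLike.re (star v ⬝ᵥ v) := by
  rw [← ofReal_eunorm_sq, RCLike.ofReal_re]

theorem norm_star_dotProduct_le (u v : ι → 𝕜) : ‖star u ⬝ᵥ v‖ ≤ eunorm u * eunorm v := by
  rw [eunorm_eq_norm_toLp, eunorm_eq_norm_toLp, dotProduct_comm,
    ← EuclideanSpace.inner_toLp_toLp]
  exact norm_inner_le_norm _ _

end Euclidean

section Matrix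

open Matrix

variable {m l : Type*} [Fintype m] [Fintype l]

theorem star_mulVec_dotProduct (A : Matrix m l 𝕜) (u : l → 𝕜) (v : m → 𝕜) :
    star (A *ᵥ u) ⬝ᵥ v = star u ⬝ᵥ Aᴴ *ᵥ v := by
  rw [dotProduct_mulVec, star_mulVec]

theorem eunorm_mulVec_sq (A : Matrix m l 𝕜) (w : l → 𝕜) :
    eunorm (A *ᵥ w) ^ 2 = RCLike.re (star w ⬝ᵥ (Aᴴ * A) *ᵥ w) := by
  rw [eunorm_sq_eq_re_dotProduct, star_mulVec_dotProduct, mulVec_mulVec]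

variable [DecidableEq l]

theorem re_star_dotProduct_diagonal_add_smul_ones_mulVec (δ : l → ℝ) (α : ℝ) (w : l → 𝕜) :
    RCLike.re (star w ⬝ᵥ
        (diagonal (fun j => (δ j : 𝕜)) + (α : 𝕜) • of (fun _ _ : l => (1 : 𝕜))) *ᵥ w)
      = ∑ j, δ j * ‖w j‖ ^ 2 + α * ‖∑ j, w j‖ ^ 2 := by
  have hmv : (diagonal (fun j => (δ j : 𝕜)) + (α : 𝕜) • of (fun _ _ : l => (1 : 𝕜))) *ᵥ w
      = fun j => δ j * w j + α * ∑ j, w j := by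
    ext j
    simp [mulVec, dotProduct, add_mul, Finset.sum_add_distrib, diagonal_apply, Finset.mul_sum,
      RCLike.real_smul_eq_coe_mul]
  have hconj (z : 𝕜) (r : ℝ) : RCLike.re (star z * (r * z)) = r * ‖z‖ ^ 2 := by
    rw [mul_left_comm, RCLike.star_def, RCLike.conj_mul]; norm_cast
  simp only [hmv, dotProduct, Pi.star_apply, mul_add, Finset.sum_add_distrib, map_add, map_sum,
    hconj, ← Finset.sum_mul, ← star_sum]

theorem le_eigenvalues_conjTranspose_mul_self (A : Matrix m l 𝕜) {c : ℝ}
    (hA : ∀ w, c * eunorm w ^ 2 ≤ eunorm (A *ᵥ w) ^ 2) (i : l) :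
    c ≤ (isHermitian_conjTranspose_mul_self A).eigenvalues i := by
  have hH := isHermitian_conjTranspose_mul_self A
  have hv : eunorm ⇑(hH.eigenvectorBasis i) = 1 := by
    rw [eunorm_eq_norm_toLp, WithLp.toLp_ofLp]
    exact hH.eigenvectorBasis.orthonormal.1 i
  simpa [hv, hH.eigenvalues_eq, eunorm_mulVec_sq] using hA (hH.eigenvectorBasis i)

theorem le_nthSV (M : Matrix m l 𝕜) {c : ℝ}
    (hM : ∀ i, c ^ 2 ≤ (isHermitian_conjTranspose_mul_self M).eigenvalues i) {j : ℕ}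
    (hj : j - 1 < Fintype.card l) : c ≤ nthSV M j := by
  set L := ((singularValues M).sort (· ≤ ·)).reverse
  have hlen : L.length = Fintype.card l := by
    simp [L, singularValues]
  have hmem : nthSV M j ∈ singularValues M := by
    rw [← Multiset.mem_sort (· ≤ ·), ← List.mem_reverse, nthSV,
      List.getD_eq_getElem _ _ (hlen ▸ hj)]
    exact List.getElem_mem _
  obtain ⟨i, -, hi⟩ := Multiset.mem_map.1 hmem
  exact hi ▸ Real.le_sqrt_of_sq_le (hM i)

theorem isUnit_det_conjTranspose_mul_self {A : Matrix m l 𝕜} {c : ℝ} (hc : 0 < c)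
    (hA : ∀ w, c * eunorm w ^ 2 ≤ eunorm (A *ᵥ w) ^ 2) : IsUnit (Aᴴ * A).det := by
  rw [isUnit_iff_ne_zero, Ne, ← exists_mulVec_eq_zero_iff]
  rintro ⟨w, hw, hGw⟩
  have h := hA w
  rw [eunorm_mulVec_sq, hGw, dotProduct_zero, map_zero] at h
  exact h.not_gt (mul_pos hc (pow_pos (eunorm_pos.2 hw) 2))

theorem specNorm_inv_mul_conjTranspose_le (A : Matrix m l 𝕜) {c : ℝ} (hc : 0 < c)
    (hA : ∀ w, c ^ 2 * eunorm w ^ 2 ≤ eunorm (A *ᵥ w) ^ 2) :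
    specNorm ((Aᴴ * A)⁻¹ * Aᴴ) ≤ c⁻¹ := by
  have hG := mul_nonsing_inv _ (isUnit_det_conjTranspose_mul_self (pow_pos hc 2) hA)
  refine Real.sSup_le ?_ (inv_nonneg.2 hc.le)
  rintro _ ⟨v, hv, rfl⟩
  set w := ((Aᴴ * A)⁻¹ * Aᴴ) *ᵥ v
  have hGw : (Aᴴ * A) *ᵥ w = Aᴴ *ᵥ v := by
    rw [mulVec_mulVec, ← Matrix.mul_assoc, hG, Matrix.one_mul]
  have hAw : eunorm (A *ᵥ w) ^ 2 ≤ eunorm (A *ᵥ w) := calc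
    eunorm (A *ᵥ w) ^ 2 = RCLike.re (star (A *ᵥ w) ⬝ᵥ v) := by
      rw [eunorm_mulVec_sq, hGw, star_mulVec_dotProduct A w v]
    _ ≤ ‖star (A *ᵥ w) ⬝ᵥ v‖ := RCLike.re_le_norm _
    _ ≤ eunorm (A *ᵥ w) * eunorm v := norm_star_dotProduct_le _ _
    _ = eunorm (A *ᵥ w) := by rw [hv, mul_one]
  have hAw1 : eunorm (A *ᵥ w) ≤ 1 := by nlinarith [eunorm_nonneg (A *ᵥ w)]
  have hcw : (c * eunorm w) ^ 2 ≤ 1 ^ 2 := by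
    rw [mul_pow]; nlinarith [hA w, eunorm_nonneg (A *ᵥ w)]
  rw [inv_eq_one_div, le_div_iff₀' hc]
  exact (pow_le_pow_iff_left₀ (mul_nonneg hc.le (eunorm_nonneg w)) zero_le_one two_ne_zero).1 hcw

end Matrix

section Kernel

variable [NeZero d]

@[simp]
theorem Kmx_apply_zero (a : (k : Fin d) → Fin (n k) → 𝕜) (j : {k : Fin d // k ≠ 0})
    (x : Fin (n 0)) : Kmx a ⟨0, x⟩ j = a 0 x := by
  simp [Kmx, kvec]

@[simp]
theorem Kmx_apply_self (a : (k : Fin d) → Fin (n k) → 𝕜) (j : {k : Fin d // k ≠ 0})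
    (x : Fin (n j)) : Kmx a ⟨j, x⟩ j = -a j x := by
  simp [Kmx, kvec, j.2]

theorem Kmx_apply_of_ne (a : (k : Fin d) → Fin (n k) → 𝕜) {j : {k : Fin d // k ≠ 0}}
    {l : Fin d} (hl : l ≠ 0) (hlj : l ≠ j) (x : Fin (n l)) : Kmx a ⟨l, x⟩ j = 0 := by
  simp [Kmx, kvec, hl, hlj]

theorem Kmx_gram (a : (k : Fin d) → Fin (n k) → 𝕜) :
    (Kmx a)ᴴ * Kmx a
      = Matrix.diagonal (fun j : {k : Fin d // k ≠ 0} => ((eunorm (a j.1) ^ 2 : ℝ) : 𝕜))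
        + ((eunorm (a 0) ^ 2 : ℝ) : 𝕜) •
            Matrix.of (fun _ _ : {k : Fin d // k ≠ 0} => (1 : 𝕜)) := by
  ext j j'
  rw [Matrix.mul_apply, Fintype.sum_sigma, Fintype.sum_eq_add_sum_subtype_ne _ 0,
    Finset.sum_eq_single j]
  · simp only [Matrix.conjTranspose_apply, Kmx_apply_zero]
    by_cases hjj : j = j'
    · subst hjj
      simp [ofReal_eunorm_sq, dotProduct, add_comm]
    · have hjj' : j.1 ≠ j'.1 := fun h => hjj (Subtype.ext h)
      simp [Kmx_apply_of_ne a j.2 hjj', hjj, ofReal_eunorm_sq, dotProduct]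
  · rintro l - hl
    have hlj : l.1 ≠ j.1 := fun h => hl (Subtype.ext h)
    simp [Kmx_apply_of_ne a l.2 hlj]
  · simp

theorem mul_eunorm_sq_le_eunorm_Kmx_mulVec_sq (a : (k : Fin d) → Fin (n k) → 𝕜) {c : ℝ}
    (hc : ∀ j : {k : Fin d // k ≠ 0}, c ≤ eunorm (a j) ^ 2) (w : {k : Fin d // k ≠ 0} → 𝕜) :
    c * eunorm w ^ 2 ≤ eunorm (Kmx a *ᵥ w) ^ 2 := by
  rw [eunorm_mulVec_sq, Kmx_gram, re_star_dotProduct_diagonal_add_smul_ones_mulVec, eunorm_sq,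
    Finset.mul_sum]
  calc ∑ j, c * ‖w j‖ ^ 2 ≤ ∑ j, eunorm (a j.1) ^ 2 * ‖w j‖ ^ 2 :=
        Finset.sum_le_sum fun j _ => by gcongr; exact hc j
    _ ≤ _ := le_add_of_nonneg_right (by positivity)

end Kernel

section InfOfImage

variable {ι : Type*} {p : ι → Prop} {f : ι → ℝ}

theorem sInf_setOf_le (hf : ∀ i, 0 ≤ f i) {i : ι} (hi : p i) :
    sInf {x | ∃ k, p k ∧ x = f k} ≤ f i :=
  csInf_le ⟨0, by rintro _ ⟨k, -, rfl⟩; exact hf k⟩ ⟨i, hi, rfl⟩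

theorem exists_sInf_setOf_eq [Finite ι] (h : ∃ i, p i) :
    ∃ i, p i ∧ sInf {x | ∃ k, p k ∧ x = f k} = f i := by
  obtain ⟨i, hi⟩ := h
  have hne : {x | ∃ k, p k ∧ x = f k}.Nonempty := ⟨f i, i, hi, rfl⟩
  have hfin : {x | ∃ k, p k ∧ x = f k}.Finite :=
    (Set.finite_range f).subset <| by rintro _ ⟨k, -, rfl⟩; exact ⟨k, rfl⟩
  obtain ⟨k, hk, he⟩ := hne.csInf_mem hfin
  exact ⟨k, hk, he⟩

end InfOfImage

theorem kernel_gram_and_pseudoinverse_general [NeZero d]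
    (hd : 2 ≤ d)
    (a : (k : Fin d) → Fin (n k) → 𝕜) :
    (Kmx a)ᴴ * Kmx a
      = Matrix.diagonal (fun j : {k : Fin d // k ≠ 0} => ((eunorm (a j.1) ^ 2 : ℝ) : 𝕜))
        + ((eunorm (a 0) ^ 2 : ℝ) : 𝕜) •
            Matrix.of (fun _ _ : {k : Fin d // k ≠ 0} => (1 : 𝕜))
    ∧ (∀ i : {k : Fin d // k ≠ 0},
        sInf { x : ℝ | ∃ k : Fin d, k ≠ 0 ∧ x = eunorm (a k) ^ 2 }
          ≤ (Matrix.isHermitian_conjTranspose_mul_self (Kmx a)).eigenvalues i)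
    ∧ sInf { x : ℝ | ∃ k : Fin d, k ≠ 0 ∧ x = eunorm (a k) } ≤ nthSV (Kmx a) (d - 1)
    ∧ ((∀ k, a k ≠ 0) →
        specNorm (((Kmx a)ᴴ * Kmx a)⁻¹ * (Kmx a)ᴴ)
          ≤ (sInf { x : ℝ | ∃ k : Fin d, k ≠ 0 ∧ x = eunorm (a k) })⁻¹) := by
  set m := sInf { x : ℝ | ∃ k : Fin d, k ≠ 0 ∧ x = eunorm (a k) }
  have hm : 0 ≤ m := Real.sInf_nonneg (by rintro _ ⟨k, -, rfl⟩; exact eunorm_nonneg _)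
  have hmK : ∀ w, m ^ 2 * eunorm w ^ 2 ≤ eunorm (Kmx a *ᵥ w) ^ 2 :=
    mul_eunorm_sq_le_eunorm_Kmx_mulVec_sq a fun j =>
      pow_le_pow_left₀ hm (sInf_setOf_le (fun _ => eunorm_nonneg _) j.2) 2
  refine ⟨Kmx_gram a,
    le_eigenvalues_conjTranspose_mul_self _ (mul_eunorm_sq_le_eunorm_Kmx_mulVec_sq a fun j =>
      sInf_setOf_le (fun _ => sq_nonneg _) j.2),
    le_nthSV _ (le_eigenvalues_conjTranspose_mul_self _ hmK) ?_,
    fun ha => specNorm_inv_mul_conjTranspose_le _ ?_ hmK⟩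
  · rw [Fintype.card_subtype_compl, Fintype.card_fin, Fintype.card_unique]
    omega
  · obtain ⟨k, -, hmk⟩ := exists_sInf_setOf_eq (p := (· ≠ 0)) (f := fun k => eunorm (a k))
      ⟨(⟨1, hd⟩ : Fin d), by simp [Fin.ext_iff]⟩
    exact (show m = eunorm (a k) from hmk) ▸ eunorm_pos.2 (ha k)

/-- the Gram matrix of the kernel-basis matrix `K` is
`diag(‖a^{(2)}‖²,…,‖a^{(d)}‖²) + ‖a^{(1)}‖²·𝟙𝟙ᵀ`; every eigenvalue is at least
`min_{2≤k≤d}‖a^{(k)}‖²`, the least singular value of `K` is at least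
`min_{2≤k≤d}‖a^{(k)}‖`, and the Moore–Penrose pseudoinverse `K† = (KᴴK)⁻¹Kᴴ`
satisfies `‖K†‖₂ ≤ (min_{2≤k≤d}‖a^{(k)}‖)⁻¹`. -/
theorem kernel_gram_and_pseudoinverse [NeZero d]
    (hd : 2 ≤ d) (hn : ∀ k, 2 ≤ n k)
    (a : (k : Fin d) → Fin (n k) → 𝕜) :
    (Kmx a)ᴴ * Kmx a
      = Matrix.diagonal (fun j : {k : Fin d // k ≠ 0} => ((eunorm (a j.1) ^ 2 : ℝ) : 𝕜))
        + ((eunorm (a 0) ^ 2 : ℝ) : 𝕜) •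
            Matrix.of (fun _ _ : {k : Fin d // k ≠ 0} => (1 : 𝕜))
    ∧ (∀ i : {k : Fin d // k ≠ 0},
        sInf { x : ℝ | ∃ k : Fin d, k ≠ 0 ∧ x = eunorm (a k) ^ 2 }
          ≤ (Matrix.isHermitian_conjTranspose_mul_self (Kmx a)).eigenvalues i)
    ∧ sInf { x : ℝ | ∃ k : Fin d, k ≠ 0 ∧ x = eunorm (a k) } ≤ nthSV (Kmx a) (d - 1)
    ∧ ((∀ k, a k ≠ 0) →
        specNorm (((Kmx a)ᴴ * Kmx a)⁻¹ * (Kmx a)ᴴ)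
          ≤ (sInf { x : ℝ | ∃ k : Fin d, k ≠ 0 ∧ x = eunorm (a k) })⁻¹) :=
  kernel_gram_and_pseudoinverse_general hd a

end TensorCond
end
end
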